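/- arXiv:0809.0017 — 8 statements merged into one kernel-verified Lean document; each statement's English description precedes it below -/
import Mathlib

section
/- Let k be a field of characteristic 0 and suppose there exists a positive integer n such that the natural projection k*^ → k*/(k*)ⁿ is an isomorphism. Then the natural map (k*_tors)^ → k*^, induced by the inclusion of the torsion subgroup k*_tors ⊆ k*, is an isomorphism. -/
/-- The subgroup of `n`-th powers of a commutative group. -/
def powSubgroup (A : Type*) [CommGroup A] (n : ℕ) : Subgroup A :=
  MonoidHom.range (powMonoidHom n : A →* A)

/-- The transition map `A/Aᵐ → A/Aⁿ` of the projective system, for `n ∣ m`. -/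
def powTransition (A : Type*) [CommGroup A] {n m : ℕ} (h : n ∣ m) :
    A ⧸ powSubgroup A m →* A ⧸ powSubgroup A n :=
  QuotientGroup.map _ _ (MonoidHom.id A) (by
    rintro a ⟨b, rfl⟩
    obtain ⟨c, rfl⟩ := h
    refine Subgroup.mem_comap.2 ⟨b ^ c, ?_⟩
    simp only [powMonoidHom_apply, MonoidHom.id_apply, ← pow_mul, mul_comm])

/-- The pro-ℕ completion `Â = lim ← A/Aⁿ`, over positive integers ordered by
divisibility, realized as the subgroup of compatible families in the product. -/
def ProNCompletion (A : Type*) [CommGroup A] :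
    Subgroup (∀ n : ℕ+, A ⧸ powSubgroup A (n : ℕ)) where
  carrier := {x | ∀ (n m : ℕ+) (h : (n : ℕ) ∣ (m : ℕ)), powTransition A h (x m) = x n}
  one_mem' := by
    intro n m h
    simp
  mul_mem' := by
    intro x y hx hy n m h
    simp only [Pi.mul_apply, map_mul, hx n m h, hy n m h]
  inv_mem' := by
    intro x hx n m h
    simp only [Pi.inv_apply, map_inv, hx n m h]

lemma mem_proNCompletion {A : Type*} [CommGroup A]
    (x : ∀ n : ℕ+, A ⧸ powSubgroup A (n : ℕ)) :
    x ∈ ProNCompletion A ↔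
      ∀ (n m : ℕ+) (h : (n : ℕ) ∣ (m : ℕ)), powTransition A h (x m) = x n :=
  Iff.rfl

/-- The natural map `A → Â` to the pro-ℕ completion. -/
def toProN (A : Type*) [CommGroup A] : A →* ProNCompletion A where
  toFun a := ⟨fun _ => QuotientGroup.mk a, by
    intro n m h
    simp [powTransition]⟩
  map_one' := by
    apply Subtype.ext
    funext n
    simp
  map_mul' := by
    intro a b
    apply Subtype.ext
    funext n
    simp

/-- The natural projection `Â → A/Aⁿ`. -/
def proNProj (A : Type*) [CommGroup A] (n : ℕ+) :
    ProNCompletion A →* A ⧸ powSubgroup A (n : ℕ) :=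
  (Pi.evalMonoidHom (fun n : ℕ+ => A ⧸ powSubgroup A (n : ℕ)) n).comp
    (ProNCompletion A).subtype

/-- The map `A/Aⁿ → B/Bⁿ` induced by a homomorphism `f : A → B`. -/
def levelMap {A B : Type*} [CommGroup A] [CommGroup B] (f : A →* B) (n : ℕ) :
    A ⧸ powSubgroup A n →* B ⧸ powSubgroup B n :=
  QuotientGroup.map _ _ f (by
    rintro a ⟨b, rfl⟩
    exact Subgroup.mem_comap.2 ⟨f b, by simp [powMonoidHom_apply]⟩)

lemma powTransition_levelMap {A B : Type*} [CommGroup A] [CommGroup B] (f : A →* B)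
    {n m : ℕ} (h : n ∣ m) (z : A ⧸ powSubgroup A m) :
    powTransition B h (levelMap f m z) = levelMap f n (powTransition A h z) := by
  obtain ⟨a, rfl⟩ := QuotientGroup.mk_surjective z
  simp [powTransition, levelMap]

/-- Functoriality of the pro-ℕ completion: the map `Â → B̂` induced by `f : A → B`. -/
def ProNMap {A B : Type*} [CommGroup A] [CommGroup B] (f : A →* B) :
    ProNCompletion A →* ProNCompletion B where
  toFun x := ⟨fun n => levelMap f (n : ℕ) (x.1 n), by
    intro n m h
    rw [powTransition_levelMap, x.2 n m h]⟩
  map_one' := by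
    apply Subtype.ext
    funext n
    simp
  map_mul' := by
    intro a b
    apply Subtype.ext
    funext n
    simp

/-!
It suffices to compare the two systems level by level. At level `m`, injectivity holds because
an element whose `m`-th power is torsion is torsion. For surjectivity, injectivity of `Â → A/Aⁿ`
forces `Aⁿ ⊆ A^(mn)`, so `aⁿ = c^(mn)` and `a = ζ cᵐ` with `ζⁿ = 1`.
-/

section ProNCompletion

variable {A : Type*} [CommGroup A]

lemma proNMap_bijective {B : Type*} [CommGroup B] (f : A →* B)
    (hf : ∀ m : ℕ+, Function.Bijective (levelMap f (m : ℕ))) :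
    Function.Bijective (ProNMap f) := by
  let e : ∀ m : ℕ+, _ ≃ _ := fun m => Equiv.ofBijective _ (hf m)
  refine ⟨fun x y hxy => Subtype.ext <| funext fun m =>
    (hf m).injective (congrFun (congrArg Subtype.val hxy) m), fun y => ?_⟩
  have hlift : ∀ m : ℕ+, levelMap f (m : ℕ) ((e m).symm (y.1 m)) = y.1 m :=
    fun m => (e m).apply_symm_apply _
  refine ⟨⟨fun m => (e m).symm (y.1 m), fun p q hpq => (hf p).injective ?_⟩,
    Subtype.ext <| funext hlift⟩
  rw [← powTransition_levelMap f hpq, hlift q, hlift p]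
  exact y.2 p q hpq

/-- The image in `Â` of an `n`-th power vanishes at level `n`, hence is trivial. -/
lemma powSubgroup_le_of_proNProj_injective {n : ℕ+}
    (hn : Function.Injective (proNProj A n)) (m : ℕ+) :
    powSubgroup A (n : ℕ) ≤ powSubgroup A (m : ℕ) := by
  intro a ha
  have hdie : toProN A a = 1 :=
    hn <| (map_one (proNProj A n)).symm ▸ (QuotientGroup.eq_one_iff a).2 ha
  exact (QuotientGroup.eq_one_iff a).1 (congrFun (congrArg Subtype.val hdie) m)

lemma levelMap_subtype_injective (H : Subgroup A) {m : ℕ}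
    (hH : ∀ a : A, a ^ m ∈ H → a ∈ H) :
    Function.Injective (levelMap H.subtype m) := by
  intro x y hxy
  obtain ⟨t, rfl⟩ := QuotientGroup.mk_surjective x
  obtain ⟨s, rfl⟩ := QuotientGroup.mk_surjective y
  obtain ⟨c, hc⟩ := (QuotientGroup.eq (s := powSubgroup A m)).1 hxy
  rw [powMonoidHom_apply] at hc
  have hcH : c ∈ H := hH c (hc ▸ (t⁻¹ * s).2)
  exact (QuotientGroup.eq (s := powSubgroup H m)).2 ⟨⟨c, hcH⟩, Subtype.ext hc⟩

lemma levelMap_subtype_surjective (H : Subgroup A) {m : ℕ}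
    (hH : ∀ a : A, ∃ h ∈ H, ∃ c : A, a = h * c ^ m) :
    Function.Surjective (levelMap H.subtype m) := by
  intro z
  obtain ⟨a, rfl⟩ := QuotientGroup.mk_surjective z
  obtain ⟨h, hh, c, rfl⟩ := hH a
  refine ⟨QuotientGroup.mk ⟨h, hh⟩, (QuotientGroup.eq (s := powSubgroup A m)).2 ⟨c, ?_⟩⟩
  simp [powMonoidHom_apply]

lemma exists_torsion_mul_pow {n m : ℕ} (hn : n ≠ 0)
    (hdiv : powSubgroup A n ≤ powSubgroup A (m * n)) (a : A) :
    ∃ ζ ∈ CommGroup.torsion A, ∃ c : A, a = ζ * c ^ m := by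
  obtain ⟨c, hc⟩ := hdiv ⟨a, rfl⟩
  rw [powMonoidHom_apply, powMonoidHom_apply, pow_mul] at hc
  refine ⟨a * (c ^ m)⁻¹, isOfFinOrder_iff_pow_eq_one.2 ⟨n, Nat.pos_of_ne_zero hn, ?_⟩, c,
    by rw [inv_mul_cancel_right]⟩
  rw [mul_pow, inv_pow, hc, mul_inv_cancel]

end ProNCompletion

theorem torsion_proN_bijective_of_proj_bijective_general
    (k : Type*) [Field k]
    (h : ∃ n : ℕ+, Function.Bijective (proNProj kˣ n)) :
    Function.Bijective (ProNMap ((CommGroup.torsion kˣ).subtype)) := by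
  obtain ⟨n, hn⟩ := h
  refine proNMap_bijective _ fun m => ⟨?_, ?_⟩
  · exact levelMap_subtype_injective _ fun a ha => ha.of_pow m.ne_zero
  · exact levelMap_subtype_surjective _ <| exists_torsion_mul_pow n.ne_zero
      (powSubgroup_le_of_proNProj_injective hn.injective (m * n))

/-- If for some positive integer `n` the natural projection
`k*^ → k*/(k*)ⁿ` is an isomorphism, then the natural map `(k*_tors)^ → k*^`
induced by the inclusion of the torsion subgroup is an isomorphism. -/
theorem torsion_proN_bijective_of_proj_bijective
    (k : Type*) [Field k] [CharZero k]
    (h : ∃ n : ℕ+, Function.Bijective (proNProj kˣ n)) :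
    Function.Bijective (ProNMap ((CommGroup.torsion kˣ).subtype)) :=
  torsion_proN_bijective_of_proj_bijective_general k h
end

section
/- Let k be a field of characteristic 0. The natural map (k*_tors)^ → k*^ induced by the inclusion of the torsion subgroup is an isomorphism if and only if for every positive integer n the natural map k*_tors/(k*_tors)ⁿ → k*/(k*)ⁿ is an isomorphism. -/
/-!
A torsion element that is an `n`-th power in `A` is already an `n`-th power in the torsion
subgroup, since the root is itself torsion; so the maps `T/Tⁿ → A/Aⁿ` are always injective.
Given levelwise injectivity, a compatible family in `Â` lifts levelwise to a family that is again
compatible, and conversely every class of `A/Aⁿ` comes from `A → Â`; hence bijectivity on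
completions amounts to levelwise surjectivity.
-/

section ProNMap

variable {A B : Type*} [CommGroup A] [CommGroup B] {f : A →* B}

theorem levelMap_surjective_of_proNMap_surjective (hf : Function.Surjective (ProNMap f))
    (n : ℕ+) : Function.Surjective (levelMap f n) := by
  intro y
  obtain ⟨b, rfl⟩ := QuotientGroup.mk_surjective y
  obtain ⟨z, hz⟩ := hf (toProN B b)
  exact ⟨proNProj A n z, congrArg (proNProj B n) hz⟩

theorem proNMap_injective (hf : ∀ n : ℕ+, Function.Injective (levelMap f n)) :
    Function.Injective (ProNMap f) := fun _ _ hzw =>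
  Subtype.ext <| funext fun n => hf n (congrArg (proNProj B n) hzw)

theorem proNMap_bijective_s2 (hf : ∀ n : ℕ+, Function.Bijective (levelMap f n)) :
    Function.Bijective (ProNMap f) := by
  refine ⟨proNMap_injective fun n => (hf n).1, fun y => ?_⟩
  choose x hx using fun n : ℕ+ => (hf n).2 (y.1 n)
  refine ⟨⟨x, fun n m hnm => (hf n).1 ?_⟩, Subtype.ext (funext hx)⟩
  rw [← powTransition_levelMap, hx m, hx n, y.2 n m hnm]

end ProNMap

theorem levelMap_torsion_subtype_injective {G : Type*} [CommGroup G] {n : ℕ} (hn : n ≠ 0) :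
    Function.Injective (levelMap (CommGroup.torsion G).subtype n) := by
  intro z w hzw
  obtain ⟨a, rfl⟩ := QuotientGroup.mk_surjective z
  obtain ⟨b, rfl⟩ := QuotientGroup.mk_surjective w
  obtain ⟨x, hx⟩ : ((a⁻¹ * b : CommGroup.torsion G) : G) ∈ powSubgroup G n :=
    QuotientGroup.eq.1 hzw
  have hx_tors : x ∈ CommGroup.torsion G := by
    refine IsOfFinOrder.of_pow ?_ hn
    rw [← powMonoidHom_apply, hx]
    exact (a⁻¹ * b).2
  exact QuotientGroup.eq.2 ⟨⟨x, hx_tors⟩, Subtype.ext hx⟩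

theorem torsion_proN_bijective_iff_levelwise_general
    (k : Type*) [Field k] :
    Function.Bijective (ProNMap ((CommGroup.torsion kˣ).subtype)) ↔
      ∀ n : ℕ, 0 < n →
        Function.Bijective (levelMap ((CommGroup.torsion kˣ).subtype) n) := by
  constructor
  · intro h n hn
    exact ⟨levelMap_torsion_subtype_injective hn.ne',
      levelMap_surjective_of_proNMap_surjective h.2 ⟨n, hn⟩⟩
  · exact fun h => proNMap_bijective_s2 fun n => h n n.pos

/-- The natural map `(k*_tors)^ → k*^` on pro-ℕ completions is an
isomorphism if and only if for every positive integer `n` the natural map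
`k*_tors/(k*_tors)ⁿ → k*/(k*)ⁿ` is an isomorphism. -/
theorem torsion_proN_bijective_iff_levelwise
    (k : Type*) [Field k] [CharZero k] :
    Function.Bijective (ProNMap ((CommGroup.torsion kˣ).subtype)) ↔
      ∀ n : ℕ, 0 < n →
        Function.Bijective (levelMap ((CommGroup.torsion kˣ).subtype) n) :=
  torsion_proN_bijective_iff_levelwise_general k
end

section
/- Let k be a field of characteristic 0. The following are equivalent: (a) the pro-ℕ completion k*^ is finite, cyclic, and generated by the image of a root of unity of k; (b) k*^ is finite; (c) k*^ is countable. In particular, k*^ is either finite or uncountable. -/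
open Function

/-- The hypothesis `hS` says that `S` is closed for the product of the discrete topologies. -/
theorem Set.Countable.exists_isolated_of_pi_closed {ι : Type*} [Countable ι] {X : ι → Type*}
    {S : Set (∀ i, X i)} (hc : S.Countable) (hne : S.Nonempty)
    (hS : ∀ y, (∀ s : Finset ι, ∃ x ∈ S, ∀ i ∈ s, x i = y i) → y ∈ S) :
    ∃ x ∈ S, ∃ s : Finset ι, ∀ y ∈ S, (∀ i ∈ s, y i = x i) → y = x := by
  let _ (i : ι) : TopologicalSpace (X i) := ⊥
  have _ (i : ι) : DiscreteTopology (X i) := ⟨rfl⟩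
  have hclosed : IsClosed S := by
    refine isClosed_of_closure_subset fun y hy => hS y fun s => ?_
    obtain ⟨x, hxy, hxS⟩ := mem_closure_iff.1 hy ((s : Set ι).pi fun i => {y i})
      (isOpen_set_pi s.finite_toSet fun i _ => isOpen_discrete _) (by simp)
    exact ⟨x, hxS, fun i hi => hxy i hi⟩
  have := hclosed.isCompletelyMetrizableSpace
  have : Countable S := hc.to_subtype
  have : Nonempty S := hne.to_subtype
  obtain ⟨x, hx⟩ := nonempty_interior_of_iUnion_of_closed (fun x : S => isClosed_singleton)
    (Set.iUnion_of_singleton S)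
  have hx_open : IsOpen ({x} : Set S) :=
    (Set.subset_singleton_iff_eq.1 interior_subset).resolve_left hx.ne_empty ▸ isOpen_interior
  obtain ⟨U, hU, hUx⟩ := isOpen_induced_iff.1 hx_open
  obtain ⟨s, u, hu, hsU⟩ := isOpen_pi_iff.1 hU x.1 (by simpa using hUx.ge rfl)
  refine ⟨x, x.2, s, fun y hy hyx => ?_⟩
  have : (⟨y, hy⟩ : S) ∈ ({x} : Set S) :=
    hUx ▸ hsU fun i hi => by simpa [hyx i hi] using (hu i hi).2
  exact congrArg Subtype.val this

theorem quotient_powSubgroup_pow_eq_one {A : Type*} [CommGroup A] (n : ℕ)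
    (q : A ⧸ powSubgroup A n) : q ^ n = 1 := by
  obtain ⟨a, rfl⟩ := QuotientGroup.mk_surjective q
  rw [← QuotientGroup.mk_pow, QuotientGroup.eq_one_iff]
  exact ⟨a, rfl⟩

namespace ProNCompletion

variable {A : Type*} [CommGroup A]

theorem mem_of_forall_finset (y : ∀ n : ℕ+, A ⧸ powSubgroup A (n : ℕ))
    (hy : ∀ s : Finset ℕ+, ∃ x ∈ ProNCompletion A, ∀ n ∈ s, x n = y n) :
    y ∈ ProNCompletion A := by
  intro n m h
  obtain ⟨x, hx, hxy⟩ := hy {n, m}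
  rw [← hxy n (by simp), ← hxy m (by simp)]
  exact hx n m h

@[simp]
theorem proNProj_toProN (n : ℕ+) (a : A) : proNProj A n (toProN A a) = a := rfl

theorem powTransition_proNProj {n m : ℕ+} (h : n ∣ m) (x : ProNCompletion A) :
    powTransition A (PNat.dvd_iff.1 h) (proNProj A m x) = proNProj A n x :=
  x.2 n m _

theorem proNProj_eq_one_of_dvd {n m : ℕ+} (h : n ∣ m) {x : ProNCompletion A}
    (hx : proNProj A m x = 1) : proNProj A n x = 1 := by
  rw [← powTransition_proNProj h, hx, map_one]

theorem exists_injective_proNProj [Countable (ProNCompletion A)] :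
    ∃ N : ℕ+, Injective (proNProj A N) := by
  obtain ⟨x, hx, s, hs⟩ := Set.Countable.exists_isolated_of_pi_closed
    (X := fun n : ℕ+ => A ⧸ powSubgroup A n) (S := ProNCompletion A)
    (Set.to_countable _) ⟨1, (ProNCompletion A).one_mem⟩ mem_of_forall_finset
  refine ⟨∏ n ∈ s, n, (injective_iff_map_eq_one _).2 fun z hz => Subtype.ext ?_⟩
  have hzs : ∀ n ∈ s, z.1 n = 1 := fun n hn =>
    proNProj_eq_one_of_dvd (Finset.dvd_prod_of_mem id hn) hz
  simpa using hs (x * z.1) (mul_mem hx z.2) fun n hn => by simp [hzs n hn]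

theorem pow_eq_one_of_injective_proNProj {N : ℕ+} (hN : Injective (proNProj A N))
    (x : ProNCompletion A) : x ^ (N : ℕ) = 1 :=
  hN <| by rw [map_pow, map_one, quotient_powSubgroup_pow_eq_one]

theorem exists_pow_eq_one_toProN_eq {N : ℕ+} (hN : Injective (proNProj A N))
    (x : ProNCompletion A) : ∃ ζ : A, ζ ^ (N : ℕ) = 1 ∧ toProN A ζ = x := by
  obtain ⟨a, ha⟩ := QuotientGroup.mk_surjective (proNProj A (N * N) x)
  obtain ⟨b, hb⟩ : a ^ (N : ℕ) ∈ powSubgroup A ((N * N : ℕ+) : ℕ) := by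
    rw [← QuotientGroup.eq_one_iff, QuotientGroup.mk_pow, ha, ← map_pow,
      pow_eq_one_of_injective_proNProj hN, map_one]
  refine ⟨a * (b ^ (N : ℕ))⁻¹, ?_, hN ?_⟩
  · simp only [powMonoidHom_apply, PNat.mul_coe] at hb
    rw [mul_pow, inv_pow, ← pow_mul, hb, mul_inv_cancel]
  · have hb' : (b ^ (N : ℕ) : A ⧸ powSubgroup A N) = 1 := quotient_powSubgroup_pow_eq_one _ _
    rw [proNProj_toProN, QuotientGroup.mk_mul, QuotientGroup.mk_inv, QuotientGroup.mk_pow, hb',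
      inv_one, mul_one, ← powTransition_proNProj (dvd_mul_right N N), ← ha]
    rfl

theorem finite_units_and_mem_zpowers_of_countable (R : Type*) [CommRing R] [IsDomain R]
    [Countable (ProNCompletion Rˣ)] :
    Finite (ProNCompletion Rˣ) ∧ ∃ ζ : Rˣ, IsOfFinOrder ζ ∧
      ∀ x : ProNCompletion Rˣ, x ∈ Subgroup.zpowers (toProN Rˣ ζ) := by
  obtain ⟨N, hN⟩ := exists_injective_proNProj (A := Rˣ)
  let f : rootsOfUnity N R →* ProNCompletion Rˣ := (toProN Rˣ).comp (rootsOfUnity N R).subtype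
  have hf : Surjective f := fun x => by
    obtain ⟨ζ, hζ, rfl⟩ := exists_pow_eq_one_toProN_eq hN x
    exact ⟨⟨ζ, (mem_rootsOfUnity _ _).2 hζ⟩, rfl⟩
  obtain ⟨g, hg⟩ := IsCyclic.exists_generator (α := rootsOfUnity N R)
  refine ⟨.of_surjective f hf, g,
    (rootsOfUnity N R).subtype.isOfFinOrder (isOfFinOrder_of_finite g), fun x => ?_⟩
  obtain ⟨y, rfl⟩ := hf x
  exact f.map_zpowers g ▸ Subgroup.mem_map_of_mem f (hg y)

end ProNCompletion

theorem proN_finite_cyclic_tfae_general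
    (k : Type*) [Field k] :
    ((Finite (ProNCompletion kˣ) ∧ ∃ ζ : kˣ, IsOfFinOrder ζ ∧
        ∀ x : ProNCompletion kˣ, x ∈ Subgroup.zpowers (toProN kˣ ζ)) ↔
      Finite (ProNCompletion kˣ)) ∧
    (Finite (ProNCompletion kˣ) ↔ Countable (ProNCompletion kˣ)) ∧
    (Finite (ProNCompletion kˣ) ∨ ¬ Countable (ProNCompletion kˣ)) := by
  have structure_of_countable (_ : Countable (ProNCompletion kˣ)) :=
    ProNCompletion.finite_units_and_mem_zpowers_of_countable k
  have finite_iff_countable : Finite (ProNCompletion kˣ) ↔ Countable (ProNCompletion kˣ) :=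
    ⟨fun _ => inferInstance, fun hc => (structure_of_countable hc).1⟩
  refine ⟨⟨And.left, fun hfin => structure_of_countable (finite_iff_countable.1 hfin)⟩,
    finite_iff_countable, ?_⟩
  rw [finite_iff_countable]
  exact em _

/-- For a field `k` of characteristic zero the following are
equivalent: (a) `k*^` is finite, cyclic and generated by the image of a root of
unity of `k`; (b) `k*^` is finite; (c) `k*^` is countable.  In particular
`k*^` is either finite or uncountable. -/
theorem proN_finite_cyclic_tfae
    (k : Type*) [Field k] [CharZero k] :
    ((Finite (ProNCompletion kˣ) ∧ ∃ ζ : kˣ, IsOfFinOrder ζ ∧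
        ∀ x : ProNCompletion kˣ, x ∈ Subgroup.zpowers (toProN kˣ ζ)) ↔
      Finite (ProNCompletion kˣ)) ∧
    (Finite (ProNCompletion kˣ) ↔ Countable (ProNCompletion kˣ)) ∧
    (Finite (ProNCompletion kˣ) ∨ ¬ Countable (ProNCompletion kˣ)) :=
  proN_finite_cyclic_tfae_general k
end

section
/- Let A be an abelian group, written multiplicatively, whose pro-ℕ completion Â = lim←_n A/Aⁿ is countable. Then the projective system stabilizes at a finite level: there exists a positive integer n such that the natural projection Â → A/Aⁿ is an isomorphism. -/
theorem discreteTopology_of_countable_of_baireSpace (G : Type*) [Group G] [TopologicalSpace G]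
    [IsTopologicalGroup G] [T1Space G] [BaireSpace G] [Countable G] : DiscreteTopology G := by
  obtain ⟨x, hx⟩ := nonempty_interior_of_iUnion_of_closed (fun x : G => isClosed_singleton)
    (Set.iUnion_of_singleton G)
  have hopen : IsOpen ({x} : Set G) :=
    hx.subset_singleton_iff.mp interior_subset ▸ isOpen_interior
  exact (MulAction.IsPretransitive.discreteTopology_iff G x).mpr hopen

theorem Subgroup.exists_finset_eq_one_of_eval_eq_one_of_countable {ι : Type*} [Countable ι]
    {G : ι → Type*} [∀ i, Group (G i)] [∀ i, TopologicalSpace (G i)]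
    [∀ i, DiscreteTopology (G i)] (S : Subgroup (∀ i, G i)) (hS : IsClosed (S : Set (∀ i, G i)))
    [Countable S] : ∃ F : Finset ι, ∀ x ∈ S, (∀ i ∈ F, x i = 1) → x = 1 := by
  have : BaireSpace S := by
    have := hS.isCompletelyPseudoMetrizableSpace
    infer_instance
  have := discreteTopology_of_countable_of_baireSpace S
  obtain ⟨U, hU, hUS⟩ := isOpen_induced_iff.mp (isOpen_discrete ({1} : Set S))
  have h1U : (1 : ∀ i, G i) ∈ U := by
    simpa using congrArg (1 ∈ ·) hUS
  obtain ⟨F, u, hu, hFU⟩ := isOpen_pi_iff.mp hU 1 h1U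
  refine ⟨F, fun x hx hxF => ?_⟩
  have hxU : x ∈ U := hFU fun i hi => hxF i hi ▸ (hu i hi).2
  have : (⟨x, hx⟩ : S) ∈ ({1} : Set S) := hUS ▸ hxU
  simpa using this

theorem isClosed_proNCompletion (A : Type*) [CommGroup A]
    [∀ n : ℕ+, TopologicalSpace (A ⧸ powSubgroup A n)]
    [∀ n : ℕ+, DiscreteTopology (A ⧸ powSubgroup A n)] :
    IsClosed (ProNCompletion A : Set (∀ n : ℕ+, A ⧸ powSubgroup A n)) := by
  have hcoe : (ProNCompletion A : Set (∀ n : ℕ+, A ⧸ powSubgroup A n)) =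
      ⋂ (n : ℕ+) (m : ℕ+) (h : (n : ℕ) ∣ m), {x | powTransition A h (x m) = x n} := by
    ext x
    simp only [SetLike.mem_coe, mem_proNCompletion, Set.mem_iInter, Set.mem_ofPred_eq]
  rw [hcoe]
  exact isClosed_iInter fun n => isClosed_iInter fun m => isClosed_iInter fun h =>
    isClosed_eq ((continuous_of_discreteTopology (f := powTransition A h)).comp
      (continuous_apply m)) (continuous_apply n)

theorem proNProj_surjective (A : Type*) [CommGroup A] (n : ℕ+) :
    Function.Surjective (proNProj A n) := by
  intro z
  obtain ⟨a, rfl⟩ := QuotientGroup.mk_surjective z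
  exact ⟨toProN A a, rfl⟩

/-- If the pro-ℕ completion `Â` of an abelian group `A` is
countable, then the projective system stabilizes at a finite level: for some
positive integer `n` the natural projection `Â → A/Aⁿ` is an isomorphism. -/
theorem proN_stabilizes_of_countable
    (A : Type*) [CommGroup A] (h : Countable (ProNCompletion A)) :
    ∃ n : ℕ+, Function.Bijective (proNProj A n) := by
  let (n : ℕ+) : TopologicalSpace (A ⧸ powSubgroup A n) := ⊥
  have (n : ℕ+) : DiscreteTopology (A ⧸ powSubgroup A n) := ⟨rfl⟩
  obtain ⟨F, hF⟩ := (ProNCompletion A).exists_finset_eq_one_of_eval_eq_one_of_countable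
    (isClosed_proNCompletion A)
  refine ⟨∏ i ∈ F, i, (injective_iff_map_eq_one _).mpr fun x hx => ?_, proNProj_surjective A _⟩
  refine Subtype.ext (hF x x.2 fun i hi => ?_)
  rw [← x.2 i _ (PNat.dvd_iff.mp (Finset.dvd_prod_of_mem id hi))]
  exact (congrArg _ hx).trans (map_one _)
end

section
/- Let k be a field of characteristic 0 with a fixed algebraic closure k̄. Suppose there exist an element a ∈ k*, a positive integer n, and a root α ∈ k̄ of Xⁿ − a such that the extension k(α)/k is not an abelian field extension (i.e., it is not both Galois and with commutative Galois group). Then the pro-ℕ completion k*^ is uncountable; in particular k has nontrivial Kummer theory. -/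
/-!
If some `b ∈ A` and prime `p` satisfy `b ^ p ^ m ∉ A ^ p ^ (m + 1)` for every `m`, then the
powers `b ^ z`, with `z` running over the p-adic integers whose digits are `0` or `1`, are
pairwise distinct in `Â`, so `Â` has the cardinality of the continuum. Otherwise every element
of `A` is, for every prime `p`, a `p`-th power up to torsion, hence an `n`-th power up to torsion
for every `n ≥ 1`. For `A = k*` this gives `a = cⁿ ζ` with `ζ` a root of unity, so `α / c` is a
root of unity and `k(α) = k(α / c)` is a cyclotomic, hence abelian, extension of `k`.
-/

section PowSubgroup

variable {A : Type*} [CommGroup A]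

lemma mk_pow_mod_eq (b : A) (n c : ℕ) :
    (QuotientGroup.mk (b ^ (c % n)) : A ⧸ powSubgroup A n) = QuotientGroup.mk (b ^ c) := by
  have hpow : (QuotientGroup.mk ((b ^ (c / n)) ^ n) : A ⧸ powSubgroup A n) = 1 :=
    (QuotientGroup.eq_one_iff _).2 ⟨b ^ (c / n), rfl⟩
  conv_rhs => rw [← Nat.mod_add_div c n, pow_add, pow_mul', QuotientGroup.mk_mul, hpow, mul_one]

lemma mk_pow_eq_mk_pow_of_modEq (b : A) {n c d : ℕ} (h : c ≡ d [MOD n]) :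
    (QuotientGroup.mk (b ^ c) : A ⧸ powSubgroup A n) = QuotientGroup.mk (b ^ d) := by
  rw [← mk_pow_mod_eq, h, mk_pow_mod_eq]

def proNPow (b : A) (c : ℕ+ → ℕ) (hc : ∀ n m : ℕ+, (n : ℕ) ∣ m → c m ≡ c n [MOD n]) :
    ProNCompletion A :=
  ⟨fun n => QuotientGroup.mk (b ^ c n), fun n m h => by
    rw [powTransition, QuotientGroup.map_mk, MonoidHom.id_apply]
    exact mk_pow_eq_mk_pow_of_modEq b (hc n m h)⟩

end PowSubgroup

/-- Chinese remaindering: `x` on the `p`-part of each level, `0` on the prime-to-`p` part. -/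
lemma exists_compatible_of_modEq_prime_pow {p : ℕ} (hp : p.Prime) {x : ℕ → ℕ}
    (hx : ∀ ⦃i j⦄, i ≤ j → x j ≡ x i [MOD p ^ i]) :
    ∃ c : ℕ+ → ℕ, (∀ n m : ℕ+, (n : ℕ) ∣ m → c m ≡ c n [MOD n]) ∧
      ∀ n : ℕ+, c n ≡ x ((n : ℕ).factorization p) [MOD p ^ (n : ℕ).factorization p] := by
  have hcop (n : ℕ+) :
      Nat.Coprime (p ^ (n : ℕ).factorization p) ((n : ℕ) / p ^ (n : ℕ).factorization p) :=
    Nat.Coprime.pow_left _ (Nat.coprime_ordCompl hp n.ne_zero)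
  let crt (n : ℕ+) := Nat.chineseRemainder (hcop n) (x ((n : ℕ).factorization p)) 0
  refine ⟨fun n => crt n, fun n m hnm => ?_, fun n => (crt n).2.1⟩
  have hv : (n : ℕ).factorization p ≤ (m : ℕ).factorization p :=
    (Nat.factorization_le_iff_dvd n.ne_zero m.ne_zero).2 hnm p
  have hpart : (crt m : ℕ) ≡ crt n [MOD p ^ (n : ℕ).factorization p] :=
    (((crt m).2.1.of_dvd (pow_dvd_pow p hv)).trans (hx hv)).trans (crt n).2.1.symm
  have hcompl : (crt m : ℕ) ≡ crt n [MOD (n : ℕ) / p ^ (n : ℕ).factorization p] :=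
    ((crt m).2.2.of_dvd (Nat.ordCompl_dvd_ordCompl_of_dvd hnm p)).trans (crt n).2.2.symm
  simpa only [Nat.ordProj_mul_ordCompl_eq_self] using
    (Nat.modEq_and_modEq_iff_modEq_mul (hcop n)).1 ⟨hpart, hcompl⟩

section DigitSum

/-- The truncation below `p ^ m` of the `p`-adic integer whose digits are the indicator of `S`. -/
noncomputable def digitSum (p : ℕ) (S : Set ℕ) (m : ℕ) : ℕ :=
  ∑ i ∈ Finset.range m, S.indicator (p ^ ·) i

variable (p : ℕ) (S : Set ℕ)

lemma digitSum_succ (m : ℕ) :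
    digitSum p S (m + 1) = digitSum p S m + S.indicator (p ^ ·) m :=
  Finset.sum_range_succ _ _

lemma digitSum_modEq {i j : ℕ} (hij : i ≤ j) : digitSum p S j ≡ digitSum p S i [MOD p ^ i] := by
  have hdvd : p ^ i ∣ ∑ l ∈ Finset.Ico i j, S.indicator (p ^ ·) l :=
    Finset.dvd_sum fun l hl => by
      by_cases hlS : l ∈ S
      · simpa [hlS] using pow_dvd_pow p (Finset.mem_Ico.1 hl).1
      · simp [hlS]
  rw [digitSum, digitSum, ← Finset.sum_range_add_sum_Ico _ hij]
  simpa using (Nat.modEq_zero_iff_dvd.2 hdvd).add_left (digitSum p S i)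

lemma digitSum_congr {T : Set ℕ} {m : ℕ} (h : ∀ i < m, i ∈ S ↔ i ∈ T) :
    digitSum p S m = digitSum p T m :=
  Finset.sum_congr rfl fun i hi => by
    have hiST := h i (Finset.mem_range.1 hi)
    by_cases hiS : i ∈ S
    · rw [Set.indicator_of_mem hiS, Set.indicator_of_mem (hiST.1 hiS)]
    · rw [Set.indicator_of_notMem hiS, Set.indicator_of_notMem (mt hiST.2 hiS)]

end DigitSum

section Injectivity

variable {A : Type*} [CommGroup A] {p : ℕ} {b : A}

lemma mk_pow_digitSum_ne {S T : Set ℕ} {i : ℕ} (hb : b ^ p ^ i ∉ powSubgroup A (p ^ (i + 1)))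
    (hST : ∀ j < i, j ∈ S ↔ j ∈ T) (hS : i ∈ S) (hT : i ∉ T) :
    (QuotientGroup.mk (b ^ digitSum p S (i + 1)) : A ⧸ powSubgroup A (p ^ (i + 1))) ≠
      QuotientGroup.mk (b ^ digitSum p T (i + 1)) := by
  intro h
  rw [digitSum_succ, digitSum_succ, digitSum_congr p S hST, Set.indicator_of_mem hS,
    Set.indicator_of_notMem hT, add_zero, pow_add b, QuotientGroup.mk_mul, mul_eq_left] at h
  exact hb ((QuotientGroup.eq_one_iff _).1 h)

lemma injective_mk_pow_digitSum (hb : ∀ i, b ^ p ^ i ∉ powSubgroup A (p ^ (i + 1))) :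
    Function.Injective fun (S : Set ℕ) (i : ℕ) =>
      (QuotientGroup.mk (b ^ digitSum p S (i + 1)) : A ⧸ powSubgroup A (p ^ (i + 1))) := by
  classical
  intro S T hST
  by_contra hne
  have hdiff : ∃ i, ¬(i ∈ S ↔ i ∈ T) := by
    contrapose! hne
    exact Set.ext hne
  have hmin (j : ℕ) (hj : j < Nat.find hdiff) : j ∈ S ↔ j ∈ T := by
    simpa using Nat.find_min hdiff hj
  have hSTi := congrFun hST (Nat.find hdiff)
  by_cases hS : Nat.find hdiff ∈ S
  · have hT : Nat.find hdiff ∉ T := fun hT => Nat.find_spec hdiff ⟨fun _ => hT, fun _ => hS⟩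
    exact mk_pow_digitSum_ne (hb _) hmin hS hT hSTi
  · have hT : Nat.find hdiff ∈ T := by simpa [hS] using Nat.find_spec hdiff
    exact mk_pow_digitSum_ne (hb _) (fun j hj => (hmin j hj).symm) hT hS hSTi.symm

end Injectivity

lemma not_countable_set_nat : ¬ Countable (Set ℕ) := fun _ =>
  let ⟨f, hf⟩ := Countable.exists_injective_nat (Set ℕ)
  Function.cantor_injective f hf

theorem not_countable_proNCompletion_of_pow_pow_notMem {A : Type*} [CommGroup A] {p : ℕ}
    (hp : p.Prime) {b : A} (hb : ∀ i, b ^ p ^ i ∉ powSubgroup A (p ^ (i + 1))) :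
    ¬ Countable (ProNCompletion A) := by
  intro _
  have hlift (S : Set ℕ) : ∃ y : ProNCompletion A, ∀ i,
      proNProj A ⟨p ^ (i + 1), pow_pos hp.pos _⟩ y = QuotientGroup.mk (b ^ digitSum p S (i + 1)) := by
    obtain ⟨c, hc, hcS⟩ := exists_compatible_of_modEq_prime_pow hp fun _ _ => digitSum_modEq p S
    refine ⟨proNPow b c hc, fun i => mk_pow_eq_mk_pow_of_modEq b ?_⟩
    simpa [hp.factorization_pow] using hcS ⟨p ^ (i + 1), pow_pos hp.pos _⟩
  choose y hy using hlift
  have hinj : Function.Injective y := fun S T hST =>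
    injective_mk_pow_digitSum hb (funext fun i => (hy S i).symm.trans (hST ▸ hy T i))
  exact not_countable_set_nat hinj.countable

section Torsion

variable {A : Type*} [CommGroup A]

lemma exists_pow_mul_isOfFinOrder_of_pow_pow_mem {p m : ℕ} (hp : 0 < p) {b : A}
    (h : b ^ p ^ m ∈ powSubgroup A (p ^ (m + 1))) :
    ∃ c ζ : A, IsOfFinOrder ζ ∧ b = c ^ p * ζ := by
  obtain ⟨c, hc⟩ := h
  refine ⟨c, b * (c ^ p)⁻¹, isOfFinOrder_iff_pow_eq_one.2 ⟨p ^ m, by positivity, ?_⟩,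
    by rw [mul_comm b, mul_inv_cancel_left]⟩
  rw [mul_pow, inv_pow, ← pow_mul, ← pow_succ', ← hc, powMonoidHom_apply, mul_inv_cancel]

lemma exists_pow_mul_isOfFinOrder_of_prime
    (h : ∀ p : ℕ, p.Prime → ∀ b : A, ∃ c ζ : A, IsOfFinOrder ζ ∧ b = c ^ p * ζ)
    {N : ℕ} (hN : 0 < N) (b : A) : ∃ c ζ : A, IsOfFinOrder ζ ∧ b = c ^ N * ζ := by
  induction N using Nat.recOnMul generalizing b with
  | zero => exact absurd hN (lt_irrefl 0)
  | one => exact ⟨b, 1, IsOfFinOrder.one, by simp⟩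
  | prime p hp => exact h p hp b
  | mul M N ihM ihN =>
    obtain ⟨c, ζ, hζ, rfl⟩ := ihM (Nat.pos_of_mul_pos_right hN) b
    obtain ⟨d, η, hη, rfl⟩ := ihN (Nat.pos_of_mul_pos_left hN) c
    exact ⟨d, η ^ M * ζ, (hη.pow).mul hζ, by rw [mul_pow, ← pow_mul, mul_comm N, mul_assoc]⟩

theorem exists_pow_mul_isOfFinOrder_of_countable [Countable (ProNCompletion A)] {N : ℕ}
    (hN : 0 < N) (b : A) : ∃ c ζ : A, IsOfFinOrder ζ ∧ b = c ^ N * ζ := by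
  refine exists_pow_mul_isOfFinOrder_of_prime (fun p hp b => ?_) hN b
  have hmem : ∃ m, b ^ p ^ m ∈ powSubgroup A (p ^ (m + 1)) := by
    by_contra! hb
    exact not_countable_proNCompletion_of_pow_pow_notMem hp hb ‹_›
  obtain ⟨m, hm⟩ := hmem
  exact exists_pow_mul_isOfFinOrder_of_pow_pow_mem hp.pos hm

end Torsion

section Cyclotomic

variable {k K : Type*} [Field k] [Field K] [Algebra k K]

open IntermediateField

lemma isAbelianGalois_adjoin_of_isOfFinOrder {ω : K} (hω : IsOfFinOrder ω) :
    IsAbelianGalois k k⟮ω⟯ := by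
  have : NeZero (orderOf ω) := ⟨hω.orderOf_pos.ne'⟩
  have hint : IsIntegral k ω := ((IsPrimitiveRoot.orderOf ω).isIntegral hω.orderOf_pos).tower_top
  have : IsCyclotomicExtension {orderOf ω} k k⟮ω⟯ := by
    change IsCyclotomicExtension {orderOf ω} k k⟮ω⟯.toSubalgebra
    rw [adjoin_simple_toSubalgebra_of_isAlgebraic hint.isAlgebraic]
    exact (IsPrimitiveRoot.orderOf ω).adjoin_isCyclotomicExtension k
  exact IsCyclotomicExtension.isAbelianGalois {orderOf ω} k _

lemma IntermediateField.adjoin_simple_mul_algebraMap (α : K) {c : k} (hc : c ≠ 0) :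
    k⟮α * algebraMap k K c⟯ = k⟮α⟯ := by
  have hc' : algebraMap k K c ∈ k⟮α * algebraMap k K c⟯ := algebraMap_mem _ c
  apply le_antisymm
  · exact adjoin_simple_le_iff.2 (mul_mem (mem_adjoin_simple_self k α) (algebraMap_mem _ c))
  · refine adjoin_simple_le_iff.2 ?_
    have := mul_mem (mem_adjoin_simple_self k (α * algebraMap k K c)) (inv_mem hc')
    rwa [mul_inv_cancel_right₀ ((map_ne_zero _).2 hc)] at this

end Cyclotomic

theorem proN_uncountable_of_nonabelian_radical_general
    (k : Type*) [Field k]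
    (K : Type*) [Field K] [Algebra k K]
    (a : kˣ) (n : ℕ) (hn : 0 < n) (α : K)
    (hα : α ^ n = algebraMap k K (a : k))
    (hnotab : ¬ (IsGalois k (IntermediateField.adjoin k {α}) ∧
      ∀ σ τ : (IntermediateField.adjoin k {α} : IntermediateField k K) ≃ₐ[k]
          (IntermediateField.adjoin k {α} : IntermediateField k K),
        σ * τ = τ * σ)) :
    ¬ Countable (ProNCompletion kˣ) := by
  intro _
  obtain ⟨c, ζ, hζ, rfl⟩ := exists_pow_mul_isOfFinOrder_of_countable hn a
  set ω := α * algebraMap k K ↑c⁻¹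
  have hωn : ω ^ n = algebraMap k K ζ := by
    rw [mul_pow, hα, ← map_pow, ← map_mul, ← Units.val_pow_eq_pow_val, ← Units.val_mul,
      inv_pow, mul_inv_cancel_comm]
  have hωn_fin : IsOfFinOrder (ω ^ n) := by
    rw [hωn]
    exact ((algebraMap k K).toMonoidHom.comp (Units.coeHom k)).isOfFinOrder hζ
  have hω : IsOfFinOrder ω := hωn_fin.of_pow hn.ne'
  have hadj : IntermediateField.adjoin k {ω} = IntermediateField.adjoin k {α} :=
    IntermediateField.adjoin_simple_mul_algebraMap α c⁻¹.ne_zero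
  have habel := isAbelianGalois_adjoin_of_isOfFinOrder (k := k) hω
  rw [hadj] at habel
  exact hnotab ⟨inferInstance, fun σ τ => Std.Commutative.comm σ τ⟩

/-- If there are `a ∈ k*`, `n ≥ 1` and a root `α` of `Xⁿ - a`
in a fixed algebraic closure of `k` such that `k(α)/k` is not an abelian
extension, then `k*^` is uncountable, i.e. `k` has nontrivial Kummer theory. -/
theorem proN_uncountable_of_nonabelian_radical
    (k : Type*) [Field k] [CharZero k]
    (K : Type*) [Field K] [Algebra k K] [IsAlgClosure k K]
    (a : kˣ) (n : ℕ) (hn : 0 < n) (α : K)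
    (hα : α ^ n = algebraMap k K (a : k))
    (hnotab : ¬ (IsGalois k (IntermediateField.adjoin k {α}) ∧
      ∀ σ τ : (IntermediateField.adjoin k {α} : IntermediateField k K) ≃ₐ[k]
          (IntermediateField.adjoin k {α} : IntermediateField k K),
        σ * τ = τ * σ)) :
    ¬ Countable (ProNCompletion kˣ) :=
  proN_uncountable_of_nonabelian_radical_general k K a n hn α hα hnotab
end

section
/- Let E/F be a finite extension of fields of characteristic 0. Then the kernel of the natural map F*^ → E*^ on pro-ℕ completions of multiplicative groups has order at most 2, and the only possibly nontrivial element of this kernel is the class of −1 ∈ F*. -/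
open Polynomial IntermediateField

theorem mem_of_forall_prime_pow_ordCompl_mem {G : Type*} [CommGroup G] {H : Subgroup G} {g : G}
    {w : ℕ} (hw : w ≠ 0) (hg : g ^ w = 1)
    (h : ∀ p : ℕ, p.Prime → p ∣ w → g ^ ordCompl[p] w ∈ H) : g ∈ H := by
  set o := orderOf (g : G ⧸ H)
  have ho : ∀ k, o ∣ k ↔ g ^ k ∈ H := fun k ↦ by
    rw [orderOf_dvd_iff_pow_eq_one, ← QuotientGroup.mk_pow, QuotientGroup.eq_one_iff]
  have how : o ∣ w := (ho w).2 (hg ▸ H.one_mem)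
  suffices o = 1 by simpa using (ho 1).1 (by rw [this])
  by_contra hne
  have hq := Nat.minFac_prime hne
  have hqo := Nat.minFac_dvd o
  exact Nat.not_dvd_ordCompl hq hw <| hqo.trans ((ho _).2 (h _ hq (hqo.trans how)))

theorem orderOf_eq_prime_pow_add {G : Type*} [Monoid G] {p a m : ℕ} [hp : Fact p.Prime]
    (ha : a ≠ 0) {x : G} (hx : orderOf (x ^ p ^ m) = p ^ a) : orderOf x = p ^ (a + m) := by
  obtain ⟨a, rfl⟩ := Nat.exists_eq_succ_of_ne_zero ha
  rw [show a.succ + m = a + m + 1 by omega]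
  apply orderOf_eq_prime_pow
  · rw [pow_add, mul_comm, pow_mul, ← orderOf_dvd_iff_pow_eq_one, hx]
    exact (Nat.pow_dvd_pow_iff_le_right hp.out.one_lt).not.2 (by omega)
  · rw [show a + m + 1 = m + a.succ by omega, pow_add, pow_mul, ← hx, pow_orderOf_eq_one]

theorem mk_eq_one_or_eq_mk_neg_one_of_mem_sup {G : Type*} [CommGroup G] [HasDistribNeg G]
    {N : Subgroup G} {g : G} (hg : g ∈ N ⊔ Subgroup.zpowers (-1)) :
    (g : G ⧸ N) = 1 ∨ (g : G ⧸ N) = ((-1 : G) : G ⧸ N) := by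
  obtain ⟨y, hy, z, hz, rfl⟩ := Subgroup.mem_sup.1 hg
  obtain ⟨k, rfl⟩ := Subgroup.mem_zpowers_iff.1 hz
  rw [QuotientGroup.mk_mul, (QuotientGroup.eq_one_iff y).2 hy, one_mul]
  rcases Int.even_or_odd k with hk | hk
  · exact Or.inl (by rw [hk.neg_one_zpow, QuotientGroup.mk_one])
  · exact Or.inr (by rw [hk.neg_one_zpow])

theorem eq_one_or_eq_toProN_of_forall {A : Type*} [CommGroup A] (x : ProNCompletion A) (a : A)
    (h : ∀ n, x.1 n = 1 ∨ x.1 n = (a : A ⧸ powSubgroup A n)) : x = 1 ∨ x = toProN A a := by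
  by_cases hall : ∀ n, x.1 n = 1
  · exact Or.inl (Subtype.ext (funext hall))
  push Not at hall
  obtain ⟨n₀, hn₀⟩ := hall
  refine Or.inr (Subtype.ext (funext fun n ↦ ?_))
  rcases h (n * n₀) with h1 | h1
  · refine absurd ?_ hn₀
    rw [← x.2 n₀ (n * n₀) (dvd_mul_left _ _), h1, map_one]
  · rw [← x.2 n (n * n₀) (dvd_mul_right _ _), h1]
    rfl

section RootsOfUnity

variable {K : Type*} [Field K]

theorem Units.eq_neg_one_of_orderOf_eq_two {ζ : Kˣ} (h : orderOf ζ = 2) : ζ = -1 := by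
  rw [← orderOf_units, orderOf_eq_prime_iff, sq_eq_one_iff] at h
  exact Units.ext (h.1.resolve_left h.2)

theorem Units.exists_pow_eq_of_orderOf_eq {g ζ : Kˣ} {N : ℕ} [NeZero N]
    (hg : orderOf g = N) (hζ : ζ ^ N = 1) : ∃ e, g ^ e = ζ := by
  have hprim : IsPrimitiveRoot (g : K) N :=
    IsPrimitiveRoot.coe_units_iff.2 (IsPrimitiveRoot.iff_orderOf.2 hg)
  obtain ⟨e, -, he⟩ :=
    hprim.eq_pow_of_pow_eq_one (by rw [← Units.val_pow_eq_pow_val, hζ, Units.val_one])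
  exact ⟨e, Units.ext (by simpa using he)⟩

theorem Units.exists_pow_eq_of_orderOf_eq_prime_pow {p a n : ℕ} [hp : Fact p.Prime]
    (hn : n ≠ 0) {g ζ : Kˣ} (hg : orderOf g = p ^ (a + n.factorization p))
    (hζ : ζ ^ p ^ a = 1) : ∃ θ : Kˣ, θ ^ n = ζ := by
  have hgV : orderOf (g ^ p ^ n.factorization p) = p ^ a := by
    rw [orderOf_pow_of_dvd (pow_ne_zero _ hp.out.ne_zero) (hg ▸ pow_dvd_pow p (by omega)), hg,
      pow_add, Nat.mul_div_cancel _ (pow_pos hp.out.pos _)]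
  have hgn : orderOf (g ^ n) = p ^ a := by
    rw [← Nat.ordProj_mul_ordCompl_eq_self n p, pow_mul, Nat.Coprime.orderOf_pow, hgV]
    exact hgV ▸ (Nat.coprime_ordCompl hp.out hn).pow_left a
  have : NeZero (p ^ a) := ⟨pow_ne_zero _ hp.out.ne_zero⟩
  obtain ⟨e, he⟩ := Units.exists_pow_eq_of_orderOf_eq hgn hζ
  exact ⟨g ^ e, by rw [← pow_mul, mul_comm, pow_mul, he]⟩

theorem Units.pow_ne_of_orderOf_eq_of_forall_ne {p c : ℕ} [hp : Fact p.Prime] (hc : c ≠ 0)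
    {g : Kˣ} (hg : orderOf g = p ^ c) (hmax : ∀ β : Kˣ, orderOf β ≠ p ^ (c + 1)) (b : K) :
    b ^ p ≠ g := by
  intro hb
  have hb0 : b ≠ 0 := by rintro rfl; exact g.ne_zero (by rw [← hb, zero_pow hp.out.ne_zero])
  refine hmax (Units.mk0 b hb0) (orderOf_eq_prime_pow_add hc ?_)
  rw [pow_one, show Units.mk0 b hb0 ^ p = g from Units.ext (by simpa using hb), hg]

/- If `x² = a` then `N(x) = -a`; so a square root of `x` would give the square root
`i · N(√x)` of `a`. -/
theorem X_pow_sub_C_irreducible_of_two_pow {i : K} (hi : i ^ 2 = -1)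
    (k : ℕ) {a : K} (ha : ∀ b : K, b ^ 2 ≠ a) : Irreducible (X ^ 2 ^ k - C a) := by
  induction k generalizing K a with
  | zero => simpa using irreducible_X_sub_C a
  | succ k IH =>
    rw [pow_succ]
    apply X_pow_mul_sub_C_irreducible (X_pow_sub_C_irreducible_of_prime Nat.prime_two ha)
    intro L _ _ x hx
    have hxint : IsIntegral K x := not_not.mp fun h ↦ by
      simpa only [degree_zero, degree_X_pow_sub_C Nat.prime_two.pos,
        WithBot.natCast_ne_bot] using congr_arg degree (hx.symm.trans (dif_neg h))
    refine IH (i := algebraMap K K⟮x⟯ i) (by rw [← map_pow, hi, map_neg, map_one]) ?_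
    intro b hb
    have hnorm : Algebra.norm K b ^ 2 = -a := by
      rw [← map_pow, hb, ← adjoin.powerBasis_gen hxint,
        Algebra.PowerBasis.norm_gen_eq_coeff_zero_minpoly]
      simp [minpoly_gen, hx, adjoin.powerBasis_dim]
    exact ha (i * Algebra.norm K b) (by rw [mul_pow, hi, hnorm, neg_mul_neg, one_mul])

theorem X_pow_sub_C_irreducible_of_orderOf_eq {p c : ℕ} [hp : Fact p.Prime] (hc : c ≠ 0)
    (hc2 : p = 2 → 2 ≤ c) {g : Kˣ} (hg : orderOf g = p ^ c)
    (hmax : ∀ β : Kˣ, orderOf β ≠ p ^ (c + 1)) (k : ℕ) :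
    Irreducible (X ^ p ^ k - C (g : K)) := by
  have hnot := Units.pow_ne_of_orderOf_eq_of_forall_ne hc hg hmax
  rcases eq_or_ne p 2 with rfl | hp2
  · obtain ⟨c, rfl⟩ := Nat.exists_eq_add_of_le' (hc2 rfl)
    have hi : orderOf (g ^ 2 ^ c) = 2 ^ 2 := by
      rw [orderOf_pow_of_dvd (by positivity) (hg ▸ pow_dvd_pow 2 (by omega)), hg, pow_add,
        Nat.mul_div_cancel_left _ (by positivity)]
    have hi2 : (g ^ 2 ^ c) ^ 2 = -1 := Units.eq_neg_one_of_orderOf_eq_two <| by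
      rw [orderOf_pow_of_dvd two_ne_zero (hi ▸ dvd_pow_self 2 two_ne_zero), hi]
      norm_num
    exact X_pow_sub_C_irreducible_of_two_pow (i := ((g ^ 2 ^ c : Kˣ) : K))
      (by simpa using congrArg Units.val hi2) k hnot
  · exact X_pow_sub_C_irreducible_of_prime_pow hp.out hp2 k hnot

end RootsOfUnity

section FiniteExtension

variable {F E : Type*} [Field F] [Field E] [Algebra F E] [FiniteDimensional F E]

theorem prime_pow_le_finrank_of_orderOf_eq {p c k : ℕ} [hp : Fact p.Prime] (hc : c ≠ 0)
    (hc2 : p = 2 → 2 ≤ c) {g : Fˣ} (hg : orderOf g = p ^ c)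
    (hmax : ∀ β : Fˣ, orderOf β ≠ p ^ (c + 1)) {z : Eˣ} (hz : orderOf z = p ^ (c + k)) :
    p ^ k ≤ Module.finrank F E := by
  have hzk : orderOf (z ^ p ^ k) = p ^ c := by
    rw [orderOf_pow_of_dvd (pow_ne_zero _ hp.out.ne_zero) (hz ▸ pow_dvd_pow p (by omega)), hz,
      pow_add, Nat.mul_div_cancel _ (pow_pos hp.out.pos _)]
  have hgE : Units.map (algebraMap F E).toMonoidHom g ^ p ^ c = 1 := by
    rw [← map_pow, ← hg, pow_orderOf_eq_one, map_one]
  obtain ⟨e, he⟩ := Units.exists_pow_eq_of_orderOf_eq hzk hgE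
  have hroot : aeval ((z ^ e : Eˣ) : E) (X ^ p ^ k - C (g : F)) = 0 := by
    have : ((z ^ e : Eˣ) : E) ^ p ^ k = algebraMap F E g := by
      rw [← Units.val_pow_eq_pow_val, ← pow_mul, mul_comm, pow_mul, he]
      rfl
    simp [← this]
  have hmin : minpoly F ((z ^ e : Eˣ) : E) = X ^ p ^ k - C (g : F) :=
    (minpoly.eq_of_irreducible_of_monic (X_pow_sub_C_irreducible_of_orderOf_eq hc hc2 hg hmax k)
      hroot (monic_X_pow_sub_C _ (pow_ne_zero _ hp.out.ne_zero))).symm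
  have := minpoly.natDegree_le (A := F) ((z ^ e : Eˣ) : E)
  rwa [hmin, natDegree_X_pow_sub_C] at this

theorem exists_pow_eq_or_eq_neg_one_of_orderOf_eq_prime_pow {p a n : ℕ} [hp : Fact p.Prime]
    (hn : n ≠ 0) {ζ : Fˣ} (hζ : orderOf ζ = p ^ a) {u : Eˣ}
    (hu : Units.map (algebraMap F E).toMonoidHom ζ = u ^ (n * p ^ Module.finrank F E)) :
    (∃ θ : Fˣ, θ ^ n = ζ) ∨ ζ = -1 := by
  classical
  set d := Module.finrank F E
  rcases Nat.eq_zero_or_pos a with rfl | ha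
  · exact Or.inl ⟨1, by rw [one_pow, eq_comm, ← orderOf_eq_one_iff, hζ, pow_zero]⟩
  set V := n.factorization p
  -- `μ_{p^c}` is the full group of `p`-power roots of unity of `F`, unless `c = a + V`
  set c := Nat.findGreatest (fun c ↦ ∃ g : Fˣ, orderOf g = p ^ c) (a + V)
  have hac : a ≤ c := Nat.le_findGreatest (by omega) ⟨ζ, hζ⟩
  obtain ⟨g, hg⟩ : ∃ g : Fˣ, orderOf g = p ^ c :=
    Nat.findGreatest_spec (P := fun c ↦ ∃ g : Fˣ, orderOf g = p ^ c) (m := a) (by omega)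
      ⟨ζ, hζ⟩
  have hcle : c ≤ a + V := Nat.findGreatest_le _
  rcases hcle.eq_or_lt with hcV | hcV
  · refine Or.inl (Units.exists_pow_eq_of_orderOf_eq_prime_pow hn (hcV ▸ hg) ?_)
    rw [← hζ, pow_orderOf_eq_one]
  have hmax : ∀ β : Fˣ, orderOf β ≠ p ^ (c + 1) := fun β hβ ↦
    Nat.findGreatest_is_greatest (Nat.lt_succ_self c) (by omega) ⟨β, hβ⟩
  have hord : orderOf (u ^ ordCompl[p] n) = p ^ (a + (V + d)) := by
    refine orderOf_eq_prime_pow_add ha.ne' ?_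
    rw [← pow_mul, pow_add, ← mul_assoc, mul_comm _ (p ^ V), Nat.ordProj_mul_ordCompl_eq_self,
      ← hu, orderOf_injective _ (Units.map_injective (algebraMap F E).injective), hζ]
  have hz : orderOf ((u ^ ordCompl[p] n) ^ p ^ (a + V - c)) = p ^ (c + d) := by
    rw [orderOf_pow_of_dvd (pow_ne_zero _ hp.out.ne_zero) (hord ▸ pow_dvd_pow p (by omega)),
      hord, Nat.pow_div (by omega) hp.out.pos]
    congr 1
    omega
  by_cases h2 : p = 2 ∧ c = 1
  · refine Or.inr (Units.eq_neg_one_of_orderOf_eq_two ?_)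
    rw [hζ, h2.1, show a = 1 by omega, pow_one]
  · exact absurd (prime_pow_le_finrank_of_orderOf_eq (by omega) (by omega) hg hmax hz)
      (Nat.lt_pow_self hp.out.one_lt).not_ge

theorem mem_powSubgroup_sup_zpowers_neg_one {n w : ℕ} (hn : n ≠ 0) (hw : w ≠ 0) {ζ : Fˣ}
    (hζ : ζ ^ w = 1) {u : Eˣ}
    (hu : Units.map (algebraMap F E).toMonoidHom ζ = u ^ (n * w ^ Module.finrank F E)) :
    ζ ∈ powSubgroup Fˣ n ⊔ Subgroup.zpowers (-1) := by
  refine mem_of_forall_prime_pow_ordCompl_mem hw hζ fun p hp hpw ↦ ?_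
  have : Fact p.Prime := ⟨hp⟩
  have hζp : (ζ ^ ordCompl[p] w) ^ p ^ w.factorization p = 1 := by
    rw [← pow_mul, mul_comm, Nat.ordProj_mul_ordCompl_eq_self, hζ]
  obtain ⟨a, -, ha⟩ := (Nat.dvd_prime_pow hp).1 (orderOf_dvd_of_pow_eq_one hζp)
  obtain ⟨k, hk⟩ := pow_dvd_pow_of_dvd hpw (Module.finrank F E)
  have hu' : Units.map (algebraMap F E).toMonoidHom (ζ ^ ordCompl[p] w) =
      ((u ^ ordCompl[p] w) ^ k) ^ (n * p ^ Module.finrank F E) := by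
    rw [map_pow, hu, ← pow_mul, ← pow_mul, ← pow_mul, hk]
    ring_nf
  rcases exists_pow_eq_or_eq_neg_one_of_orderOf_eq_prime_pow hn ha hu' with ⟨θ, hθ⟩ | h
  · exact Subgroup.mem_sup_left ⟨θ, hθ⟩
  · exact Subgroup.mem_sup_right (h ▸ Subgroup.mem_zpowers _)

theorem exists_pow_eq_one_mul_pow_of_map_eq_pow {m : ℕ} {a : Fˣ} {b : Eˣ}
    (h : Units.map (algebraMap F E).toMonoidHom a = b ^ (m * Module.finrank F E)) :
    ∃ ζ c : Fˣ, ζ ^ Module.finrank F E = 1 ∧ a = ζ * c ^ m ∧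
      ∃ u : Eˣ, Units.map (algebraMap F E).toMonoidHom ζ = u ^ m := by
  set f := Units.map (algebraMap F E).toMonoidHom
  set d := Module.finrank F E
  set c := Units.map (Algebra.norm F : E →* F) b
  have hnorm : ∀ y : Fˣ, Units.map (Algebra.norm F : E →* F) (f y) = y ^ d := fun y ↦
    Units.ext (by simp [f, d, Algebra.norm_algebraMap])
  refine ⟨a * (c ^ m)⁻¹, c, ?_, by group, b ^ d * (f c)⁻¹, ?_⟩
  · rw [mul_pow, ← hnorm a, h, map_pow, inv_pow, ← pow_mul, mul_comm m, mul_inv_cancel]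
  · rw [map_mul, h, map_inv, map_pow, mul_pow, inv_pow, ← pow_mul, mul_comm d]

theorem exists_pow_eq_one_of_proNMap_eq_one {x : ProNCompletion Fˣ}
    (hx : ProNMap (Units.map (algebraMap F E).toMonoidHom) x = 1) (n k : ℕ+) :
    ∃ ζ : Fˣ, ζ ^ Module.finrank F E = 1 ∧
      (∃ u : Eˣ, Units.map (algebraMap F E).toMonoidHom ζ = u ^ (n * k : ℕ)) ∧
      x.1 n = (ζ : Fˣ ⧸ powSubgroup Fˣ n) := by
  set M : ℕ+ := ⟨n * k * Module.finrank F E,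
    Nat.mul_pos (Nat.mul_pos n.pos k.pos) Module.finrank_pos⟩
  obtain ⟨a, ha⟩ := QuotientGroup.mk_surjective (x.1 M)
  have hker : levelMap (Units.map (algebraMap F E).toMonoidHom) M (x.1 M) = 1 :=
    congrFun (congrArg Subtype.val hx) M
  rw [← ha, levelMap, QuotientGroup.map_mk, QuotientGroup.eq_one_iff] at hker
  obtain ⟨b, hb⟩ := hker
  obtain ⟨ζ, c, hζ, rfl, hu⟩ := exists_pow_eq_one_mul_pow_of_map_eq_pow (m := n * k) hb.symm
  refine ⟨ζ, hζ, hu, ?_⟩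
  have hcn : ((c ^ (n * k : ℕ) : Fˣ) : Fˣ ⧸ powSubgroup Fˣ n) = 1 :=
    (QuotientGroup.eq_one_iff _).2
      ⟨c ^ (k : ℕ), by rw [powMonoidHom_apply, ← pow_mul, mul_comm]⟩
  have hnM : (n : ℕ) ∣ M := Dvd.intro _ (mul_assoc _ _ _).symm
  rw [← x.2 n M hnM, ← ha, powTransition, QuotientGroup.map_mk, MonoidHom.id_apply,
    QuotientGroup.mk_mul, hcn, mul_one]

end FiniteExtension

theorem proN_kernel_le_two_general
    (F E : Type*) [Field F] [Field E] [Algebra F E]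
    [FiniteDimensional F E] :
    ∀ x : ProNCompletion Fˣ,
      ProNMap (Units.map (algebraMap F E).toMonoidHom) x = 1 →
      x = 1 ∨ x = toProN Fˣ (-1) := by
  intro x hx
  have hd : Module.finrank F E ≠ 0 := Module.finrank_pos.ne'
  refine eq_one_or_eq_toProN_of_forall x (-1) fun n ↦ ?_
  obtain ⟨ζ, hζ, ⟨u, hu⟩, hxn⟩ := exists_pow_eq_one_of_proNMap_eq_one hx n
    ⟨Module.finrank F E ^ Module.finrank F E, by positivity⟩
  rw [hxn]
  exact mk_eq_one_or_eq_mk_neg_one_of_mem_sup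
    (mem_powSubgroup_sup_zpowers_neg_one n.ne_zero hd hζ hu)

/-- For a finite extension `E/F` of fields of characteristic zero,
the kernel of the natural map `F*^ → E*^` on pro-ℕ completions has order at most
two, with the class of `-1` the only possibly nontrivial element. -/
theorem proN_kernel_le_two
    (F E : Type*) [Field F] [Field E] [CharZero F] [Algebra F E]
    [FiniteDimensional F E] :
    ∀ x : ProNCompletion Fˣ,
      ProNMap (Units.map (algebraMap F E).toMonoidHom) x = 1 →
      x = 1 ∨ x = toProN Fˣ (-1) :=
  proN_kernel_le_two_general F E
end

section
/- Let k be a field of characteristic 0 and n a positive integer. Every element x of the pro-ℕ completion k*^ with xⁿ = 1 lies in the image of the natural map k* → k*^ restricted to the group μ_n(k) of n-th roots of unity in k; that is, the n-torsion subgroup of k*^ is generated by (equals) the image of μ_n(k). -/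
/- If `xⁿ = 1` in `Â`, then at level `nm` a representative `a` satisfies
`aⁿ = b^{nm}`, so `ζ = a b^{-m}` is an `n`-th root of unity representing `x` at level `m`.
Only finitely many roots of unity are available, and the levels at which a fixed `ζ`
represents `x` are closed under divisors; so if no single `ζ` worked at every level, the
product of the failing levels would be a level at which no `ζ` works. -/

namespace ProNCompletion

variable {A : Type*} [CommGroup A]

@[simp]
lemma powTransition_mk {n m : ℕ} (h : n ∣ m) (a : A) :
    powTransition A h (QuotientGroup.mk a) = QuotientGroup.mk a :=
  rfl

lemma exists_pow_eq_one_mk_eq_of_mk_pow_eq_one {n m : ℕ} {a : A}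
    (h : (QuotientGroup.mk a : A ⧸ powSubgroup A (n * m)) ^ n = 1) :
    ∃ ζ : A, ζ ^ n = 1 ∧ (QuotientGroup.mk ζ : A ⧸ powSubgroup A m) = QuotientGroup.mk a := by
  obtain ⟨b, hb⟩ := (QuotientGroup.eq_one_iff _).1 (by rwa [← QuotientGroup.mk_pow] at h)
  replace hb : b ^ (n * m) = a ^ n := hb
  refine ⟨a * (b ^ m)⁻¹, ?_, QuotientGroup.eq.2 ⟨b, ?_⟩⟩
  · rw [mul_pow, inv_pow, ← pow_mul, mul_comm m, hb, mul_inv_cancel]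
  · simp [powMonoidHom_apply]

lemma exists_pow_eq_one_mk_eq_apply {n : ℕ} (hn : 0 < n) {x : ProNCompletion A}
    (hx : x ^ n = 1) (m : ℕ+) :
    ∃ ζ : A, ζ ^ n = 1 ∧ (QuotientGroup.mk ζ : A ⧸ powSubgroup A m) = x.1 m := by
  let N : ℕ+ := ⟨n, hn⟩ * m
  obtain ⟨a, ha⟩ := QuotientGroup.mk_surjective (x.1 N)
  have hxN : (QuotientGroup.mk a : A ⧸ powSubgroup A (n * m)) ^ n = 1 := by
    have hxN := congrArg (fun y : ProNCompletion A => y.1 N) hx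
    simp only [SubgroupClass.coe_pow, Pi.pow_apply, OneMemClass.coe_one, Pi.one_apply] at hxN
    rwa [← ha] at hxN
  obtain ⟨ζ, hζn, hζa⟩ := exists_pow_eq_one_mk_eq_of_mk_pow_eq_one hxN
  refine ⟨ζ, hζn, ?_⟩
  rw [hζa, ← x.2 m N (dvd_mul_left _ _), ← ha]
  exact (powTransition_mk _ _).symm

lemma exists_toProN_eq_of_finite {S : Set A} (hS : S.Finite) {x : ProNCompletion A}
    (h : ∀ m : ℕ+, ∃ ζ ∈ S, (QuotientGroup.mk ζ : A ⧸ powSubgroup A m) = x.1 m) :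
    ∃ ζ ∈ S, toProN A ζ = x := by
  by_contra! hne
  have hfail : ∀ ζ ∈ S, ∃ m : ℕ+, (QuotientGroup.mk ζ : A ⧸ powSubgroup A m) ≠ x.1 m :=
    fun ζ hζ => by
      by_contra! hall
      exact hne ζ hζ (Subtype.ext (funext hall))
  choose! bad hbad using hfail
  obtain ⟨ζ, hζ, hζx⟩ := h (∏ η ∈ hS.toFinset, bad η)
  have hdvd : bad ζ ∣ ∏ η ∈ hS.toFinset, bad η :=
    Finset.dvd_prod_of_mem bad (hS.mem_toFinset.2 hζ)
  apply hbad ζ hζ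
  rw [← x.2 _ _ (PNat.dvd_iff.1 hdvd), ← hζx, powTransition_mk]

theorem exists_toProN_eq_of_pow_eq_one {n : ℕ} (hn : 0 < n)
    (hfin : {ζ : A | ζ ^ n = 1}.Finite) {x : ProNCompletion A} (hx : x ^ n = 1) :
    ∃ ζ : A, ζ ^ n = 1 ∧ toProN A ζ = x := by
  simpa using exists_toProN_eq_of_finite hfin (exists_pow_eq_one_mk_eq_apply hn hx)

end ProNCompletion

theorem proN_torsion_from_roots_of_unity_general
    (k : Type*) [Field k] (n : ℕ) (hn : 0 < n)
    (x : ProNCompletion kˣ) (hx : x ^ n = 1) :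
    ∃ ζ : kˣ, ζ ^ n = 1 ∧ toProN kˣ ζ = x := by
  have : NeZero n := ⟨hn.ne'⟩
  have hfin : {ζ : kˣ | ζ ^ n = 1}.Finite :=
    Set.finite_coe_iff.1 (inferInstance : Finite (rootsOfUnity n k))
  exact ProNCompletion.exists_toProN_eq_of_pow_eq_one hn hfin hx

/-- The `n`-torsion of the pro-ℕ completion `k*^` equals the
image of the group `μ_n(k)` of `n`-th roots of unity of `k` under the natural map
`k* → k*^`. -/
theorem proN_torsion_from_roots_of_unity
    (k : Type*) [Field k] [CharZero k] (n : ℕ) (hn : 0 < n)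
    (x : ProNCompletion kˣ) (hx : x ^ n = 1) :
    ∃ ζ : kˣ, ζ ^ n = 1 ∧ toProN kˣ ζ = x :=
  proN_torsion_from_roots_of_unity_general k n hn x hx
end

section
/- Let ζ₁, ζ₂, ζ₃, ζ₄ ∈ ℂ be pairwise distinct roots of unity and suppose their double ratio λ = DV(ζ₁,ζ₂;ζ₃,ζ₄) is a rational number. Then λ belongs to the set {2, −1, 1/2, 3, 1/3, −2, −1/2, 2/3, 3/2, 4, 1/4, −3, −1/3, 4/3, 3/4}. -/
/-!
Write `ζᵢ = ζ ^ aᵢ` for a primitive `n`-th root of unity `ζ`. The relation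
`q (ζ₁ - ζ₄) (ζ₂ - ζ₃) = (ζ₁ - ζ₃) (ζ₂ - ζ₄)` is a polynomial identity over `ℚ` in `ζ`, so it
holds at every primitive `n`-th root of unity `μ`. Multiplying over all `μ` gives
`q ^ φ n * N₁₄ N₂₃ = N₁₃ N₂₄`, where `Nᵢⱼ = ∏ μ, (μ ^ aᵢ - μ ^ aⱼ)` is a nonzero integer (a
resultant with the cyclotomic polynomial) with `|Nᵢⱼ| ≤ 2 ^ φ n`. Hence the `φ n`-th powers of
the numerator and denominator of `q` divide integers of size at most `4 ^ φ n`, so both are at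
most `4` in absolute value. The same holds for `1 - q = DV(ζ₁, ζ₃; ζ₂, ζ₄)`, which leaves
finitely many candidates.
-/

/-- The double ratio `DV(a₁,a₂;a₃,a₄) = ((a₁−a₃)/(a₁−a₄)) · ((a₂−a₄)/(a₂−a₃))`. -/
def doubleRatio {L : Type*} [Field L] (a₁ a₂ a₃ a₄ : L) : L :=
  ((a₁ - a₃) / (a₁ - a₄)) * ((a₂ - a₄) / (a₂ - a₃))

open Polynomial Finset
open scoped Nat

section doubleRatio

variable {L : Type*} [Field L] {a₁ a₂ a₃ a₄ : L}

theorem doubleRatio_ne_zero (h₁₃ : a₁ ≠ a₃) (h₁₄ : a₁ ≠ a₄) (h₂₃ : a₂ ≠ a₃) (h₂₄ : a₂ ≠ a₄) :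
    doubleRatio a₁ a₂ a₃ a₄ ≠ 0 := by
  unfold doubleRatio
  have := sub_ne_zero.2 h₁₃
  have := sub_ne_zero.2 h₁₄
  have := sub_ne_zero.2 h₂₃
  have := sub_ne_zero.2 h₂₄
  positivity

theorem doubleRatio_swap_middle (h₁₄ : a₁ ≠ a₄) (h₂₃ : a₂ ≠ a₃) :
    doubleRatio a₁ a₃ a₂ a₄ = 1 - doubleRatio a₁ a₂ a₃ a₄ := by
  have := sub_ne_zero.2 h₁₄
  have := sub_ne_zero.2 h₂₃
  have := sub_ne_zero.2 h₂₃.symm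
  unfold doubleRatio
  field_simp
  ring

theorem doubleRatio_eq_iff {c : L} (h₁₄ : a₁ ≠ a₄) (h₂₃ : a₂ ≠ a₃) :
    doubleRatio a₁ a₂ a₃ a₄ = c ↔ c * ((a₁ - a₄) * (a₂ - a₃)) = (a₁ - a₃) * (a₂ - a₄) := by
  unfold doubleRatio
  rw [div_mul_div_comm, div_eq_iff (mul_ne_zero (sub_ne_zero.2 h₁₄)
    (sub_ne_zero.2 h₂₃)), eq_comm]

end doubleRatio

theorem Rat.num_one_sub (q : ℚ) : (1 - q).num = q.den - q.num := by
  have h : ((1 - q).num : ℚ) = q.den - q.num := by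
    rw [← Rat.mul_den_eq_num, ← Int.cast_one, Rat.intCast_sub_den, Int.cast_one, one_sub_mul,
      Rat.mul_den_eq_num]
  exact_mod_cast h

theorem Rat.natAbs_num_le_and_den_le_of_pow_mul_eq {q : ℚ} {k c : ℕ} (hk : k ≠ 0) {M N : ℤ}
    (hM : M ≠ 0) (hN : N ≠ 0) (hMc : M.natAbs ≤ c ^ k) (hNc : N.natAbs ≤ c ^ k)
    (h : q ^ k * M = N) : q.num.natAbs ≤ c ∧ q.den ≤ c := by
  have hq : q ^ k = Rat.divInt N M := by
    rw [Rat.divInt_eq_div, ← h, mul_div_cancel_right₀ _ (Int.cast_ne_zero.2 hM)]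
  constructor
  · have hdvd : q.num ^ k ∣ N := by rw [← Rat.num_pow, hq]; exact Rat.num_dvd N hM
    have := (Int.natAbs_le_of_dvd_ne_zero hdvd hN).trans hNc
    rw [Int.natAbs_pow] at this
    exact (pow_le_pow_iff_left₀ (Nat.zero_le _) (Nat.zero_le _) hk).1 this
  · have hdvd : ((q.den ^ k : ℕ) : ℤ) ∣ M := by rw [← Rat.den_pow, hq]; exact Rat.den_dvd N M
    have := (Int.natAbs_le_of_dvd_ne_zero hdvd hM).trans hMc
    rw [Int.natAbs_natCast] at this
    exact (pow_le_pow_iff_left₀ (Nat.zero_le _) (Nat.zero_le _) hk).1 this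

theorem IsPrimitiveRoot.aeval_eq_zero_of_aeval_eq_zero {K : Type*} [Field K] [CharZero K]
    {n : ℕ} (hn : 0 < n) {ζ μ : K} (hζ : IsPrimitiveRoot ζ n) (hμ : IsPrimitiveRoot μ n)
    {P : ℚ[X]} (hP : aeval ζ P = 0) : aeval μ P = 0 := by
  obtain ⟨R, rfl⟩ : cyclotomic n ℚ ∣ P := cyclotomic_eq_minpoly_rat hζ hn ▸ minpoly.dvd ℚ ζ hP
  rw [map_mul, cyclotomic_eq_minpoly_rat hμ hn, minpoly.aeval, zero_mul]

theorem exists_int_eq_prod_primitiveRoots_aeval {K : Type*} [Field K] [CharZero K] [IsAlgClosed K]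
    {n : ℕ} [NeZero n] (f : ℤ[X]) : ∃ N : ℤ, ∏ μ ∈ primitiveRoots n K, aeval μ f = N := by
  refine ⟨(cyclotomic n ℤ).resultant f (cyclotomic n ℤ).natDegree f.natDegree, ?_⟩
  have := resultant_eq_prod_eval (cyclotomic n K) (f.map (Int.castRingHom K)) f.natDegree
    natDegree_map_le (IsAlgClosed.splits _)
  rw [(cyclotomic.monic n K).leadingCoeff, one_pow, one_mul, cyclotomic.roots_eq_primitiveRoots_val,
    ← map_cyclotomic_int n K, (cyclotomic.monic n ℤ).natDegree_map, resultant_map_map] at this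
  rw [prod_eq_multiset_prod, ← eq_intCast (Int.castRingHom K), this]
  simp only [eval_map, aeval_def]
  rfl

theorem exists_int_eq_prod_primitiveRoots_pow_sub_pow {n a b : ℕ} (ha : a < n) (hb : b < n)
    (hab : a ≠ b) : ∃ N : ℤ, N ≠ 0 ∧ N.natAbs ≤ 2 ^ φ n ∧
      ∏ μ ∈ primitiveRoots n ℂ, (μ ^ a - μ ^ b) = N := by
  have hn : n ≠ 0 := by omega
  have : NeZero n := ⟨hn⟩
  have hprim : ∀ μ ∈ primitiveRoots n ℂ, IsPrimitiveRoot μ n :=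
    fun μ hμ => (mem_primitiveRoots (by omega)).1 hμ
  obtain ⟨N, hN⟩ := exists_int_eq_prod_primitiveRoots_aeval (K := ℂ) (n := n) (X ^ a - X ^ b)
  simp only [map_sub, map_pow, aeval_X] at hN
  refine ⟨N, ?_, ?_, hN⟩
  · rintro rfl
    obtain ⟨μ, hμ, h⟩ := prod_eq_zero_iff.1 (hN.trans Int.cast_zero)
    exact hab ((hprim μ hμ).pow_inj ha hb (sub_eq_zero.1 h))
  · have hnorm : ‖∏ μ ∈ primitiveRoots n ℂ, (μ ^ a - μ ^ b)‖ ≤ 2 ^ φ n := by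
      rw [norm_prod, ← Complex.card_primitiveRoots n]
      refine (prod_le_prod (fun _ _ => norm_nonneg _) fun μ hμ => ?_).trans_eq (prod_const 2)
      calc ‖μ ^ a - μ ^ b‖ ≤ ‖μ‖ ^ a + ‖μ‖ ^ b := by rw [← norm_pow, ← norm_pow]; apply norm_sub_le
        _ = 2 := by rw [(hprim μ hμ).norm'_eq_one hn]; norm_num
    rw [hN, Complex.norm_intCast] at hnorm
    zify
    exact_mod_cast hnorm

theorem natAbs_num_le_four_and_den_le_four_of_doubleRatio_eq {n : ℕ} (hn : 0 < n)
    {ζ₁ ζ₂ ζ₃ ζ₄ : ℂ} (h₁ : ζ₁ ^ n = 1) (h₂ : ζ₂ ^ n = 1) (h₃ : ζ₃ ^ n = 1) (h₄ : ζ₄ ^ n = 1)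
    (h₁₃ : ζ₁ ≠ ζ₃) (h₁₄ : ζ₁ ≠ ζ₄) (h₂₃ : ζ₂ ≠ ζ₃) (h₂₄ : ζ₂ ≠ ζ₄) {q : ℚ}
    (hq : doubleRatio ζ₁ ζ₂ ζ₃ ζ₄ = q) : q.num.natAbs ≤ 4 ∧ q.den ≤ 4 := by
  rw [doubleRatio_eq_iff h₁₄ h₂₃] at hq
  have : NeZero n := ⟨hn.ne'⟩
  obtain ⟨ζ, hζ⟩ : ∃ ζ : ℂ, IsPrimitiveRoot ζ n := ⟨_, Complex.isPrimitiveRoot_exp n hn.ne'⟩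
  obtain ⟨a₁, ha₁, rfl⟩ := hζ.eq_pow_of_pow_eq_one h₁
  obtain ⟨a₂, ha₂, rfl⟩ := hζ.eq_pow_of_pow_eq_one h₂
  obtain ⟨a₃, ha₃, rfl⟩ := hζ.eq_pow_of_pow_eq_one h₃
  obtain ⟨a₄, ha₄, rfl⟩ := hζ.eq_pow_of_pow_eq_one h₄
  have hconj : ∀ μ ∈ primitiveRoots n ℂ, q * ((μ ^ a₁ - μ ^ a₄) * (μ ^ a₂ - μ ^ a₃)) =
      (μ ^ a₁ - μ ^ a₃) * (μ ^ a₂ - μ ^ a₄) := by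
    intro μ hμ
    have := hζ.aeval_eq_zero_of_aeval_eq_zero hn ((mem_primitiveRoots hn).1 hμ)
      (P := C q * ((X ^ a₁ - X ^ a₄) * (X ^ a₂ - X ^ a₃)) - (X ^ a₁ - X ^ a₃) * (X ^ a₂ - X ^ a₄))
      (by simp [hq])
    simpa [sub_eq_zero] using this
  have hprod := prod_congr rfl hconj
  simp only [prod_mul_distrib, prod_const, Complex.card_primitiveRoots] at hprod
  have hne {a b : ℕ} (h : ζ ^ a ≠ ζ ^ b) : a ≠ b := fun hab => h (hab ▸ rfl)
  obtain ⟨N₁₃, h₁₃, hb₁₃, e₁₃⟩ := exists_int_eq_prod_primitiveRoots_pow_sub_pow ha₁ ha₃ (hne h₁₃)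
  obtain ⟨N₁₄, h₁₄, hb₁₄, e₁₄⟩ := exists_int_eq_prod_primitiveRoots_pow_sub_pow ha₁ ha₄ (hne h₁₄)
  obtain ⟨N₂₃, h₂₃, hb₂₃, e₂₃⟩ := exists_int_eq_prod_primitiveRoots_pow_sub_pow ha₂ ha₃ (hne h₂₃)
  obtain ⟨N₂₄, h₂₄, hb₂₄, e₂₄⟩ := exists_int_eq_prod_primitiveRoots_pow_sub_pow ha₂ ha₄ (hne h₂₄)
  rw [e₁₃, e₁₄, e₂₃, e₂₄] at hprod
  have hbound {M N : ℤ} (hM : M.natAbs ≤ 2 ^ φ n) (hN : N.natAbs ≤ 2 ^ φ n) :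
      (M * N).natAbs ≤ 4 ^ φ n := by
    rw [Int.natAbs_mul, show 4 = 2 * 2 from rfl, mul_pow]
    exact Nat.mul_le_mul hM hN
  refine Rat.natAbs_num_le_and_den_le_of_pow_mul_eq (Nat.totient_pos.2 hn).ne'
    (mul_ne_zero h₁₄ h₂₃) (mul_ne_zero h₁₃ h₂₄) (hbound hb₁₄ hb₂₃) (hbound hb₁₃ hb₂₄) ?_
  exact_mod_cast hprod

theorem mem_of_natAbs_num_le_four {q : ℚ} (hq₀ : q ≠ 0) (hq₁ : q ≠ 1) (hnum : q.num.natAbs ≤ 4)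
    (hden : q.den ≤ 4) (hnum' : (1 - q).num.natAbs ≤ 4) :
    q ∈ ({2, -1, 1/2, 3, 1/3, -2, -1/2, 2/3, 3/2, 4, 1/4, -3, -1/3, 4/3, 3/4} : Set ℚ) := by
  rw [Rat.num_one_sub] at hnum'
  rw [Ne, ← Rat.num_eq_zero] at hq₀
  replace hq₁ : q.num ≠ q.den := fun h => hq₁ (by rw [← Rat.num_div_den q, h]; simp)
  have hcop := q.reduced
  have hden₀ := q.den_pos
  rw [← Rat.num_div_den q]
  generalize q.num = a at *
  generalize q.den = b at *
  have : -4 ≤ a := by omega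
  have : a ≤ 4 := by omega
  interval_cases b <;> interval_cases a <;> simp_all +decide

/-- A rational double ratio of four pairwise distinct complex
roots of unity lies in the explicit 15-element list. -/
theorem rational_doubleRatio_rootsOfUnity_mem
    (ζ₁ ζ₂ ζ₃ ζ₄ : ℂ)
    (h1 : ∃ n : ℕ, 0 < n ∧ ζ₁ ^ n = 1)
    (h2 : ∃ n : ℕ, 0 < n ∧ ζ₂ ^ n = 1)
    (h3 : ∃ n : ℕ, 0 < n ∧ ζ₃ ^ n = 1)
    (h4 : ∃ n : ℕ, 0 < n ∧ ζ₄ ^ n = 1)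
    (hdist : ζ₁ ≠ ζ₂ ∧ ζ₁ ≠ ζ₃ ∧ ζ₁ ≠ ζ₄ ∧ ζ₂ ≠ ζ₃ ∧ ζ₂ ≠ ζ₄ ∧ ζ₃ ≠ ζ₄)
    (q : ℚ) (hq : doubleRatio ζ₁ ζ₂ ζ₃ ζ₄ = (q : ℂ)) :
    q ∈ ({2, -1, 1/2, 3, 1/3, -2, -1/2, 2/3, 3/2,
          4, 1/4, -3, -1/3, 4/3, 3/4} : Set ℚ) := by
  obtain ⟨h₁₂, h₁₃, h₁₄, h₂₃, h₂₄, h₃₄⟩ := hdist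
  obtain ⟨n₁, hn₁, e₁⟩ := h1
  obtain ⟨n₂, hn₂, e₂⟩ := h2
  obtain ⟨n₃, hn₃, e₃⟩ := h3
  obtain ⟨n₄, hn₄, e₄⟩ := h4
  have hn : 0 < n₁ * n₂ * n₃ * n₄ := by positivity
  have hpow {ζ : ℂ} {m : ℕ} (h : ζ ^ m = 1) (hm : m ∣ n₁ * n₂ * n₃ * n₄) :
      ζ ^ (n₁ * n₂ * n₃ * n₄) = 1 :=
    orderOf_dvd_iff_pow_eq_one.1 ((orderOf_dvd_of_pow_eq_one h).trans hm)
  replace e₁ := hpow e₁ ⟨n₂ * n₃ * n₄, by ring⟩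
  replace e₂ := hpow e₂ ⟨n₁ * n₃ * n₄, by ring⟩
  replace e₃ := hpow e₃ ⟨n₁ * n₂ * n₄, by ring⟩
  replace e₄ := hpow e₄ ⟨n₁ * n₂ * n₃, by ring⟩
  have hq' : doubleRatio ζ₁ ζ₃ ζ₂ ζ₄ = ((1 - q : ℚ) : ℂ) := by
    rw [doubleRatio_swap_middle h₁₄ h₂₃, hq, Rat.cast_sub, Rat.cast_one]
  obtain ⟨hnum, hden⟩ :=
    natAbs_num_le_four_and_den_le_four_of_doubleRatio_eq hn e₁ e₂ e₃ e₄ h₁₃ h₁₄ h₂₃ h₂₄ hq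
  obtain ⟨hnum', -⟩ :=
    natAbs_num_le_four_and_den_le_four_of_doubleRatio_eq hn e₁ e₃ e₂ e₄ h₁₂ h₁₄ h₂₃.symm h₃₄ hq'
  have hq₀ : q ≠ 0 := by exact_mod_cast hq ▸ doubleRatio_ne_zero h₁₃ h₁₄ h₂₃ h₂₄
  have hq₁ : 1 - q ≠ 0 := by exact_mod_cast hq' ▸ doubleRatio_ne_zero h₁₂ h₁₄ h₂₃.symm h₃₄
  exact mem_of_natAbs_num_le_four hq₀ (sub_ne_zero.1 hq₁).symm hnum hden hnum'
end
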